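/- arXiv:2006.15107 — 6 statements merged into one kernel-verified Lean document; each statement's English description precedes it below -/
import Mathlib

section
/- Let n, c, c', c'' , c_Y be positive integers. Let m : ℝ^{n×c} × ℝ^{n×c} × ℝ^{c_Y} → ℝ^{n×c''}, let φ map finite multisets of matrices in ℝ^{n×c''} to ℝ^{n×c''}, and let u : ℝ^{n×c} × ℝ^{n×c''} → ℝ^{n×c'}. Assume that for every n×n permutation matrix P and all inputs: m(P·U, P·U', y) = P·m(U, U', y); φ applied to the multiset obtained by left-multiplying every element of S by P equals P·φ(S); and u(P·U, P·U') = P·u(U, U'). Define the SMP layer f by f(U, Y, A)_i = u(U_i, φ({m(U_i, U_j, Y_{ij}) : v_j ∈ N_i})), where U = (U_1, …, U_n) with U_i ∈ ℝ^{n×c}, Y = (Y_{ij}) are edge features, and A is the adjacency matrix of a simple graph on n vertices determining the neighbor sets N_i. Then f is permutation equivariant: for every permutation π of {1,…,n}, defining U'_i[j,:] = U_{π(i)}[π(j),:], Y'_{ij} = Y_{π(i)π(j)} and A'[i,j] = A[π(i), π(j)], one has f(U', Y', A')_i[j,:] = f(U, Y, A)_{π(i)}[π(j),:] for all i, j. 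-/
/-! Relabelling by `π` maps the neighbourhood of `i` in the relabelled graph bijectively onto
the neighbourhood of `π i`, so by equivariance of `m` the relabelled multiset of messages is the
image of the original one under the row permutation; equivariance of `φ` and then of `u` carries
that permutation through to the output. -/

open scoped Classical

/-- Row-permutation action of a permutation on a matrix: `(permRows π U)[i,:] = U[π i,:]`.
This is the action of (the transpose of) the permutation matrix of `π` on `U`. -/
def permRows {n c : ℕ} (π : Equiv.Perm (Fin n)) (U : Matrix (Fin n) (Fin c) ℝ) :
    Matrix (Fin n) (Fin c) ℝ :=
  U.submatrix π id

/-- One SMP layer: `f(U, Y, A)_i = u(U_i, φ({m(U_i, U_j, Y_{ij}) : v_j ∈ N_i}))`. -/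
noncomputable def smpLayer {n c c' c'' cY : ℕ}
    (m : Matrix (Fin n) (Fin c) ℝ → Matrix (Fin n) (Fin c) ℝ → (Fin cY → ℝ) →
      Matrix (Fin n) (Fin c'') ℝ)
    (φ : Multiset (Matrix (Fin n) (Fin c'') ℝ) → Matrix (Fin n) (Fin c'') ℝ)
    (u : Matrix (Fin n) (Fin c) ℝ → Matrix (Fin n) (Fin c'') ℝ →
      Matrix (Fin n) (Fin c') ℝ)
    (G : SimpleGraph (Fin n))
    (U : Fin n → Matrix (Fin n) (Fin c) ℝ)
    (Y : Fin n → Fin n → (Fin cY → ℝ)) (i : Fin n) :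
    Matrix (Fin n) (Fin c') ℝ :=
  u (U i) (φ ((G.neighborFinset i).val.map (fun j => m (U i) (U j) (Y i j))))

theorem SimpleGraph.neighborFinset_comap_equiv {V W : Type*} (G : SimpleGraph W) (e : V ≃ W)
    (v : V) [Fintype ((G.comap e).neighborSet v)] [Fintype (G.neighborSet (e v))] :
    (G.comap e).neighborFinset v = (G.neighborFinset (e v)).map e.symm.toEmbedding := by
  ext w
  simp

noncomputable def neighborMessages {n c c'' cY : ℕ}
    (m : Matrix (Fin n) (Fin c) ℝ → Matrix (Fin n) (Fin c) ℝ → (Fin cY → ℝ) →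
      Matrix (Fin n) (Fin c'') ℝ)
    (G : SimpleGraph (Fin n)) (U : Fin n → Matrix (Fin n) (Fin c) ℝ)
    (Y : Fin n → Fin n → (Fin cY → ℝ)) (i : Fin n) : Multiset (Matrix (Fin n) (Fin c'') ℝ) :=
  (G.neighborFinset i).val.map fun j => m (U i) (U j) (Y i j)

section Relabel

variable {n c c' c'' cY : ℕ}
  (m : Matrix (Fin n) (Fin c) ℝ → Matrix (Fin n) (Fin c) ℝ → (Fin cY → ℝ) →
    Matrix (Fin n) (Fin c'') ℝ)
  (G : SimpleGraph (Fin n)) (U : Fin n → Matrix (Fin n) (Fin c) ℝ)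
  (Y : Fin n → Fin n → (Fin cY → ℝ))

theorem smpLayer_eq_update_neighborMessages
    (φ : Multiset (Matrix (Fin n) (Fin c'') ℝ) → Matrix (Fin n) (Fin c'') ℝ)
    (u : Matrix (Fin n) (Fin c) ℝ → Matrix (Fin n) (Fin c'') ℝ → Matrix (Fin n) (Fin c') ℝ)
    (i : Fin n) :
    smpLayer m φ u G U Y i = u (U i) (φ (neighborMessages m G U Y i)) :=
  rfl

theorem neighborMessages_relabel (π : Equiv.Perm (Fin n))
    (hm : ∀ (U U' : Matrix (Fin n) (Fin c) ℝ) (y : Fin cY → ℝ),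
      m (permRows π U) (permRows π U') y = permRows π (m U U' y))
    (i : Fin n) :
    neighborMessages m (G.comap π) (fun a => permRows π (U (π a))) (fun a b => Y (π a) (π b)) i
      = (neighborMessages m G U Y (π i)).map (permRows π) := by
  rw [neighborMessages, neighborMessages, G.neighborFinset_comap_equiv, Finset.map_val,
    Multiset.map_map, Multiset.map_map]
  refine Multiset.map_congr rfl fun j _ => ?_
  simp [hm]

end Relabel

theorem smp_layer_equivariant_general
    (n c c' c'' cY : ℕ)
    (m : Matrix (Fin n) (Fin c) ℝ → Matrix (Fin n) (Fin c) ℝ → (Fin cY → ℝ) →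
      Matrix (Fin n) (Fin c'') ℝ)
    (φ : Multiset (Matrix (Fin n) (Fin c'') ℝ) → Matrix (Fin n) (Fin c'') ℝ)
    (u : Matrix (Fin n) (Fin c) ℝ → Matrix (Fin n) (Fin c'') ℝ →
      Matrix (Fin n) (Fin c') ℝ)
    (hm : ∀ (π : Equiv.Perm (Fin n)) (U U' : Matrix (Fin n) (Fin c) ℝ) (y : Fin cY → ℝ),
      m (permRows π U) (permRows π U') y = permRows π (m U U' y))
    (hφ : ∀ (π : Equiv.Perm (Fin n)) (S : Multiset (Matrix (Fin n) (Fin c'') ℝ)),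
      φ (S.map (permRows π)) = permRows π (φ S))
    (hu : ∀ (π : Equiv.Perm (Fin n)) (U : Matrix (Fin n) (Fin c) ℝ)
      (U' : Matrix (Fin n) (Fin c'') ℝ),
      u (permRows π U) (permRows π U') = permRows π (u U U'))
    (G : SimpleGraph (Fin n)) (U : Fin n → Matrix (Fin n) (Fin c) ℝ)
    (Y : Fin n → Fin n → (Fin cY → ℝ)) (π : Equiv.Perm (Fin n)) (i : Fin n) :
    smpLayer m φ u (G.comap ⇑π) (fun a => permRows π (U (π a)))
        (fun a b => Y (π a) (π b)) i
      = permRows π (smpLayer m φ u G U Y (π i)) := by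
  rw [smpLayer_eq_update_neighborMessages, smpLayer_eq_update_neighborMessages,
    neighborMessages_relabel m G U Y π (hm π), hφ, hu]

/-- Theorem 1 of the paper: if the message, aggregation and update
functions are permutation equivariant, then the SMP layer is permutation equivariant. -/
theorem smp_layer_equivariant
    (n c c' c'' cY : ℕ) (hn : 0 < n) (hc : 0 < c) (hc' : 0 < c') (hc'' : 0 < c'')
    (hcY : 0 < cY)
    (m : Matrix (Fin n) (Fin c) ℝ → Matrix (Fin n) (Fin c) ℝ → (Fin cY → ℝ) →
      Matrix (Fin n) (Fin c'') ℝ)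
    (φ : Multiset (Matrix (Fin n) (Fin c'') ℝ) → Matrix (Fin n) (Fin c'') ℝ)
    (u : Matrix (Fin n) (Fin c) ℝ → Matrix (Fin n) (Fin c'') ℝ →
      Matrix (Fin n) (Fin c') ℝ)
    (hm : ∀ (π : Equiv.Perm (Fin n)) (U U' : Matrix (Fin n) (Fin c) ℝ) (y : Fin cY → ℝ),
      m (permRows π U) (permRows π U') y = permRows π (m U U' y))
    (hφ : ∀ (π : Equiv.Perm (Fin n)) (S : Multiset (Matrix (Fin n) (Fin c'') ℝ)),
      φ (S.map (permRows π)) = permRows π (φ S))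
    (hu : ∀ (π : Equiv.Perm (Fin n)) (U : Matrix (Fin n) (Fin c) ℝ)
      (U' : Matrix (Fin n) (Fin c'') ℝ),
      u (permRows π U) (permRows π U') = permRows π (u U U'))
    (G : SimpleGraph (Fin n)) (U : Fin n → Matrix (Fin n) (Fin c) ℝ)
    (Y : Fin n → Fin n → (Fin cY → ℝ)) (π : Equiv.Perm (Fin n)) (i : Fin n) :
    smpLayer m φ u (G.comap ⇑π) (fun a => permRows π (U (π a)))
        (fun a b => Y (π a) (π b)) i
      = permRows π (smpLayer m φ u G U Y (π i)) :=
  smp_layer_equivariant_general n c c' c'' cY m φ u hm hφ hu G U Y π i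
end

section
/- Let G be a simple graph on n vertices with edge features y_{ij} ∈ ℝ^{c_Y}, and let (m_l, φ_l, u_l)_{l ≥ 0} define an arbitrary message-passing neural network (MPNN) computing node features by x_i^{(l+1)} = u_l(x_i^{(l)}, φ_l({m_l(x_i^{(l)}, x_j^{(l)}, y_{ij}) : v_j ∈ N_i})), where φ_l is a function of finite multisets, starting from initial features x_i^{(0)} ∈ ℝ^{c_0}. Define local context matrices U_i^{(l)} ∈ ℝ^{n×c_l} by U_i^{(0)}[k,:] = x_i^{(0)} if k = i and 0 otherwise, and U_i^{(l+1)}[k,:] = δ_{k,i} · u_l( (𝟙𝟙ᵀU_i^{(l)})[k,:], φ_l({ m_l((𝟙𝟙ᵀU_i^{(l)})[k,:], (𝟙𝟙ᵀU_j^{(l)})[k,:], y_{ij}) : v_j ∈ N_i }) ), where 𝟙 ∈ ℝ^n is the all-ones vector and δ_{k,i} = 1 if k = i and 0 otherwise. Then for every layer l ≥ 0 and every vertex v_i: U_i^{(l)}[i,:] = x_i^{(l)} and U_i^{(l)}[k,:] = 0 for every k ≠ i. -/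
open scoped Classical

theorem Matrix.of_ite_eq_pi_single {m n α : Type*} [DecidableEq m] [Zero α] (i : m)
    (v : n → α) : (Matrix.of fun k => if k = i then v else 0 : Matrix m n α) = Pi.single i v :=
  funext fun k => (Pi.single_apply i v k).symm

/-- simulation lemma behind Proposition 1. The SMP recursion which
replicates the row sum `(𝟙𝟙ᵀU)[k,:] = Σ_p U[p,:]` and zeroes out all rows except the
diagonal one reproduces, on the diagonal entries `U_i^{(l)}[i,:]`, the node features
computed by an arbitrary MPNN, while all the other rows stay zero. -/
theorem smp_simulates_mpnn (n cY : ℕ) (G : SimpleGraph (Fin n))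
    (y : Fin n → Fin n → (Fin cY → ℝ))
    (c b : ℕ → ℕ)
    (m : (l : ℕ) → (Fin (c l) → ℝ) → (Fin (c l) → ℝ) → (Fin cY → ℝ) → (Fin (b l) → ℝ))
    (φ : (l : ℕ) → Multiset (Fin (b l) → ℝ) → (Fin (b l) → ℝ))
    (u : (l : ℕ) → (Fin (c l) → ℝ) → (Fin (b l) → ℝ) → (Fin (c (l+1)) → ℝ))
    (x : (l : ℕ) → Fin n → (Fin (c l) → ℝ))
    (hx : ∀ l i, x (l+1) i = u l (x l i)
      (φ l ((G.neighborFinset i).val.map (fun j => m l (x l i) (x l j) (y i j)))))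
    (U : (l : ℕ) → Fin n → Matrix (Fin n) (Fin (c l)) ℝ)
    (hU0 : ∀ i, U 0 i = Matrix.of fun k => if k = i then x 0 i else 0)
    (hU : ∀ l i, U (l+1) i = Matrix.of fun k =>
      if k = i then
        u l (∑ p, U l i p)
          (φ l ((G.neighborFinset i).val.map
            (fun j => m l (∑ p, U l i p) (∑ p, U l j p) (y i j))))
      else 0) :
    ∀ (l : ℕ) (i : Fin n), U l i i = x l i ∧ ∀ k, k ≠ i → U l i k = 0 := by
  have h_single : ∀ l i, U l i = Pi.single i (x l i) := by
    intro l
    induction l with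
    | zero => intro i; rw [hU0, Matrix.of_ite_eq_pi_single]
    | succ l ih =>
      intro i
      have h_rowSum : ∀ j, ∑ p, U l j p = x l j := fun j => by rw [ih, Fintype.sum_pi_single']
      simp_rw [hU, h_rowSum, ← hx]
      exact Matrix.of_ite_eq_pi_single _ _
  intro l i
  rw [h_single]
  exact ⟨Pi.single_eq_same i _, fun k hk => Pi.single_eq_of_ne hk _⟩
end

section
/- Let m and u be arbitrary functions and φ an arbitrary function of finite multisets, defining the MPNN recursion x_i^{(l+1)} = u(x_i^{(l)}, φ({m(x_i^{(l)}, x_j^{(l)}) : v_j ∈ N_i})). Let d ≥ 1 and let G and G' be two finite d-regular simple graphs, on which all nodes carry the same initial feature vector x^{(0)} ∈ ℝ^c. Then for every l ≥ 0 there is a single vector x^{(l)} (depending only on l, d and the functions m, φ, u, not on the graph or the node) such that x_i^{(l)} = x^{(l)} for every node v_i of G and every node of G'. In particular, any MPNN followed by a readout that is a function only of the multiset of final node features and the number of nodes produces identical outputs on any two d-regular graphs with the same number of vertices, even when the graphs are not isomorphic. -/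
open scoped Classical


private lemma mpnn_key {X M : Type*} (m : X → X → M) (φ : Multiset M → M) (u : X → M → X)
    (d : ℕ) (x0 : X)
    {W : Type*} [Fintype W] (H : SimpleGraph W) (hH : H.IsRegularOfDegree d)
    (y : ℕ → W → X) (hy0 : ∀ v, y 0 v = x0)
    (hyrec : ∀ l v, y (l+1) v = u (y l v)
      (φ ((H.neighborFinset v).val.map (fun w => m (y l v) (y l w))))) :
    ∀ l v, y l v = Nat.rec x0 (fun _ x => u x (φ (Multiset.replicate d (m x x)))) l := by
  intro l
  induction l with
  | zero => exact hy0
  | succ l ih =>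
    intro v
    rw [hyrec]
    have : (H.neighborFinset v).val.map (fun w => m (y l v) (y l w))
        = Multiset.replicate d (m (y l v) (y l v)) := by
      rw [Multiset.eq_replicate]
      refine ⟨by rw [Multiset.card_map]; exact hH v, ?_⟩
      intro b hb
      obtain ⟨w, hw, rfl⟩ := Multiset.mem_map.mp hb
      rw [ih v, ih w]
    rw [this, ih v]

/-- on `d`-regular graphs where all nodes carry the same initial
feature, the MPNN recursion `x_i^{(l+1)} = u(x_i^{(l)}, φ({m(x_i^{(l)}, x_j^{(l)})}))`
produces, at every layer, one and the same feature vector at every node of either graph.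
In particular any readout depending only on the multiset of final node features and on
the number of nodes cannot distinguish two `d`-regular graphs of the same size. -/
theorem mpnn_constant_on_regular_graphs
    {X M : Type*} (m : X → X → M) (φ : Multiset M → M) (u : X → M → X)
    (d : ℕ) (hd : 1 ≤ d)
    {V V' : Type*} [Fintype V] [Fintype V']
    (G : SimpleGraph V) (G' : SimpleGraph V')
    (hreg : G.IsRegularOfDegree d) (hreg' : G'.IsRegularOfDegree d)
    (x0 : X)
    (xG : ℕ → V → X) (xG' : ℕ → V' → X)
    (h0 : ∀ v, xG 0 v = x0) (h0' : ∀ v, xG' 0 v = x0)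
    (hrec : ∀ l v, xG (l+1) v = u (xG l v)
      (φ ((G.neighborFinset v).val.map (fun w => m (xG l v) (xG l w)))))
    (hrec' : ∀ l v, xG' (l+1) v = u (xG' l v)
      (φ ((G'.neighborFinset v).val.map (fun w => m (xG' l v) (xG' l w))))) :
    ∃ xs : ℕ → X,
      (∀ l v, xG l v = xs l) ∧ (∀ l v, xG' l v = xs l) ∧
      (∀ (O : Type) (readout : Multiset X → ℕ → O) (L : ℕ),
        Fintype.card V = Fintype.card V' →
        readout ((Finset.univ : Finset V).val.map (xG L)) (Fintype.card V) =
          readout ((Finset.univ : Finset V').val.map (xG' L)) (Fintype.card V')) := by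
  classical
  set xs : ℕ → X := fun l => Nat.rec x0 (fun _ x => u x (φ (Multiset.replicate d (m x x)))) l with hxs
  have hG : ∀ l v, xG l v = xs l := mpnn_key m φ u d x0 G hreg xG h0 hrec
  have hG' : ∀ l v, xG' l v = xs l := mpnn_key m φ u d x0 G' hreg' xG' h0' hrec'
  refine ⟨xs, hG, hG', ?_⟩
  intro O readout L hcard
  have e1 : (Finset.univ : Finset V).val.map (xG L) = Multiset.replicate (Fintype.card V) (xs L) := by
    rw [show (Finset.univ : Finset V).val.map (xG L)
        = (Finset.univ : Finset V).val.map (fun _ => xs L) from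
      Multiset.map_congr rfl (fun v _ => hG L v), Multiset.map_const']
    simp [Finset.card_univ]
  have e2 : (Finset.univ : Finset V').val.map (xG' L) = Multiset.replicate (Fintype.card V') (xs L) := by
    rw [show (Finset.univ : Finset V').val.map (xG' L)
        = (Finset.univ : Finset V').val.map (fun _ => xs L) from
      Multiset.map_congr rfl (fun v _ => hG' L v), Multiset.map_const']
    simp [Finset.card_univ]
  rw [e1, e2, hcard]
end

section
/- For every finite simple graph G on n vertices with maximum degree d_max ≥ 1, there exist vectors x₁, …, xₙ ∈ ℝ^{2·d_max} with ‖x_i‖ = 1 for every i, such that for all i ≠ j: the vertices v_i and v_j are adjacent in G if and only if ⟨x_i, x_j⟩ = 0. -/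
/-!
Maehara's greedy construction: the vertices are placed one at a time. The vector of a new
vertex `i` must lie in `W`, the orthogonal complement of the vectors of its placed
neighbours, which has dimension at least `2d - d = d`. Besides that it only has to avoid
finitely many subspaces: the hyperplanes `(x j)ᗮ` of the placed non-neighbours `j` of `i`,
and all spans of at most `d` placed vectors. Avoiding the latter keeps every non-neighbour `j`
of any vertex `k` out of the span of the vectors of the placed neighbours of `k`; for `k = i`
this says exactly that `W` is not inside `(x j)ᗮ`. Finally, `W` can lie inside the span of `d`
placed vectors only if these are orthogonal to the vector of a placed neighbour `m` of `i`;
they then belong to neighbours of `m`, which together with `i` give `m` degree `d + 1`.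
-/

open scoped Classical

open Module Submodule Finset Function

theorem Submodule.exists_mem_forall_notMem_of_forall_not_le {K V ι : Type*} [DivisionRing K]
    [Infinite K] [AddCommGroup V] [Module K V] [Finite ι] {W : Submodule K V}
    {B : ι → Submodule K V} (hB : ∀ t, ¬ W ≤ B t) : ∃ y ∈ W, ∀ t, y ∉ B t := by
  by_contra! hcover
  obtain ⟨t, ht⟩ :=
    Subspace.exists_eq_top_of_iUnion_eq_univ (p := fun t => (B t).comap W.subtype)
      (Set.eq_univ_of_forall fun y => by simpa using hcover y y.2)
  exact hB t (comap_subtype_eq_top.mp ht)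

theorem finrank_span_image_finset_le_card {K V ι : Type*} [DivisionRing K] [AddCommGroup V]
    [Module K V] (x : ι → V) (s : Finset ι) : finrank K (span K (x '' s)) ≤ s.card := by
  rw [← coe_image]
  exact (finrank_span_finset_le_card _).trans card_image_le

namespace SimpleGraph

variable {V E : Type*} {G : SimpleGraph V} {s : Finset V} {d : ℕ}

theorem card_filter_adj_le_degree [Fintype V] (s : Finset V) (k : V) :
    (s.filter (G.Adj k)).card ≤ G.degree k := by
  rw [← card_neighborFinset_eq_degree]
  exact card_le_card fun m hm => by simpa using (mem_filter.mp hm).2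

theorem card_filter_adj_lt_degree [Fintype V] {i k : V} (hi : i ∉ s) (hki : G.Adj k i) :
    (s.filter (G.Adj k)).card < G.degree k := by
  rw [← card_neighborFinset_eq_degree]
  refine card_lt_card ((ssubset_iff_of_subset fun m hm => ?_).mpr ⟨i, by simpa using hki, ?_⟩)
  · simpa using (mem_filter.mp hm).2
  · exact fun hmem => hi (mem_filter.mp hmem).1

variable [NormedAddCommGroup E] [InnerProductSpace ℝ E]

structure IsGenericOrthoEmbeddingOn (G : SimpleGraph V) (s : Finset V) (x : V → E) : Prop where
  norm_eq_one : ∀ j ∈ s, ‖x j‖ = 1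
  adj_iff : ∀ j ∈ s, ∀ k ∈ s, j ≠ k → (G.Adj j k ↔ inner ℝ (x j) (x k) = 0)
  notMem_span : ∀ k, ∀ j ∈ s, j ≠ k → ¬ G.Adj j k →
    x j ∉ span ℝ (x '' (s.filter (G.Adj k) : Set V))

namespace IsGenericOrthoEmbeddingOn

variable {x : V → E} {i : V}

theorem empty (x : V → E) : IsGenericOrthoEmbeddingOn G ∅ x where
  norm_eq_one := by simp
  adj_iff := by simp
  notMem_span := by simp

variable [Fintype V]

theorem extend (hx : IsGenericOrthoEmbeddingOn G s x) (hdeg : ∀ v, G.degree v ≤ d)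
    (hi : i ∉ s) {z : E} (hz : ‖z‖ = 1)
    (hz_adj : ∀ j ∈ s, G.Adj i j ↔ inner ℝ z (x j) = 0)
    (hz_span : ∀ F ⊆ s, F.card ≤ d → z ∉ span ℝ (x '' F)) :
    IsGenericOrthoEmbeddingOn G (insert i s) (update x i z) := by
  have hupdate : ∀ j ∈ s, update x i z j = x j :=
    fun j hj => update_of_ne (ne_of_mem_of_not_mem hj hi) _ _
  have himage : ∀ k,
      update x i z '' (s.filter (G.Adj k) : Set V) = x '' (s.filter (G.Adj k) : Set V) :=
    fun k => Set.image_congr fun m hm => hupdate m (mem_filter.mp (mem_coe.mp hm)).1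
  refine ⟨fun j hj => ?_, fun j hj k hk hjk => ?_, fun k j hj hjk hnadj => ?_⟩
  · rcases mem_insert.mp hj with rfl | hj
    · simpa using hz
    · rw [hupdate j hj]; exact hx.norm_eq_one j hj
  · rcases mem_insert.mp hj with rfl | hjs <;> rcases mem_insert.mp hk with rfl | hks
    · exact absurd rfl hjk
    · rw [update_self, hupdate k hks]; exact hz_adj k hks
    · rw [update_self, hupdate j hjs, G.adj_comm, real_inner_comm]; exact hz_adj j hjs
    · rw [hupdate j hjs, hupdate k hks]; exact hx.adj_iff j hjs k hks hjk
  · rw [filter_insert]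
    rcases mem_insert.mp hj with rfl | hj
    · rw [if_neg fun h => hnadj h.symm, himage, update_self]
      exact hz_span _ (filter_subset _ _) ((card_filter_adj_le_degree s k).trans (hdeg k))
    rw [hupdate j hj]
    by_cases hki : G.Adj k i
    · rw [if_pos hki, coe_insert, Set.image_insert_eq, himage, update_self]
      intro hmem
      refine hz_span (insert j (s.filter (G.Adj k))) (insert_subset hj (filter_subset _ _))
        ((card_insert_le _ _).trans (by linarith [card_filter_adj_lt_degree hi hki, hdeg k])) ?_
      rw [coe_insert, Set.image_insert_eq]
      exact mem_span_insert_exchange hmem (hx.notMem_span k j hj hjk hnadj)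
    · rw [if_neg hki, himage]
      exact hx.notMem_span k j hj hjk hnadj

variable [FiniteDimensional ℝ E]

theorem orthogonal_span_neighbors_not_le_span (hx : IsGenericOrthoEmbeddingOn G s x)
    (hd : 1 ≤ d) (hE : 2 * d ≤ finrank ℝ E) (hdeg : ∀ v, G.degree v ≤ d) (hi : i ∉ s)
    {F : Finset V} (hFs : F ⊆ s) (hF : F.card ≤ d) :
    ¬ (span ℝ (x '' (s.filter (G.Adj i) : Set V)))ᗮ ≤ span ℝ (x '' F) := by
  set K := span ℝ (x '' (s.filter (G.Adj i) : Set V))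
  intro hle
  have hK : finrank ℝ K ≤ d :=
    (finrank_span_image_finset_le_card x _).trans ((card_filter_adj_le_degree s i).trans (hdeg i))
  have hB : finrank ℝ (span ℝ (x '' F)) ≤ F.card := finrank_span_image_finset_le_card x F
  have hsum := finrank_add_finrank_orthogonal K
  have hmono := Submodule.finrank_mono hle
  have hFd : F.card = d := by omega
  have hA : (s.filter (G.Adj i)).Nonempty :=
    card_pos.mp (by linarith [finrank_span_image_finset_le_card (K := ℝ) x (s.filter (G.Adj i))])
  obtain ⟨m, hm⟩ := hA
  obtain ⟨hms, him⟩ := mem_filter.mp hm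
  have hB_eq : Kᗮ = span ℝ (x '' F) := eq_of_le_of_finrank_le hle (by omega)
  have hadj : ∀ f ∈ F, G.Adj m f := by
    intro f hf
    have hxf : x f ∈ Kᗮ := hB_eq ▸ subset_span (Set.mem_image_of_mem x hf)
    have hinner := inner_right_of_mem_orthogonal (subset_span (Set.mem_image_of_mem x hm)) hxf
    have hfm : m ≠ f := by
      rintro rfl
      simp [hx.norm_eq_one m hms] at hinner
    exact (hx.adj_iff m hms f (hFs hf) hfm).mpr hinner
  have hsub : insert i F ⊆ G.neighborFinset m := insert_subset (by simpa using him.symm)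
    fun f hf => by simpa using hadj f hf
  have hcard := card_le_card hsub
  rw [card_insert_of_notMem fun h => hi (hFs h), card_neighborFinset_eq_degree] at hcard
  linarith [hdeg m]

theorem exists_extend (hx : IsGenericOrthoEmbeddingOn G s x) (hd : 1 ≤ d)
    (hE : 2 * d ≤ finrank ℝ E) (hdeg : ∀ v, G.degree v ≤ d) (hi : i ∉ s) :
    ∃ z, IsGenericOrthoEmbeddingOn G (insert i s) (update x i z) := by
  set K := span ℝ (x '' (s.filter (G.Adj i) : Set V))
  let B : {j : s // ¬ G.Adj i j} ⊕ {F : Finset V // F ⊆ s ∧ F.card ≤ d} →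
      Submodule ℝ E :=
    Sum.elim (fun j => (ℝ ∙ x j)ᗮ) (fun F => span ℝ (x '' F))
  have hB : ∀ t, ¬ Kᗮ ≤ B t := by
    rintro (⟨⟨j, hj⟩, hij⟩ | ⟨F, hFs, hF⟩)
    · change ¬ Kᗮ ≤ (ℝ ∙ x j)ᗮ
      rw [orthogonal_le_orthogonal_iff, span_singleton_le_iff_mem]
      exact hx.notMem_span i j hj (ne_of_mem_of_not_mem hj hi) fun h => hij h.symm
    · exact hx.orthogonal_span_neighbors_not_le_span hd hE hdeg hi hFs hF
  obtain ⟨y, hyK, hyB⟩ := exists_mem_forall_notMem_of_forall_not_le hB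
  have hy : y ≠ 0 := by
    simpa [B] using hyB (.inr ⟨∅, empty_subset s, by simp⟩)
  have hzB : ∀ t, ‖y‖⁻¹ • y ∉ B t := fun t h =>
    hyB t ((smul_mem_iff _ (inv_ne_zero (norm_ne_zero_iff.mpr hy))).mp h)
  refine ⟨‖y‖⁻¹ • y,
    hx.extend hdeg hi (norm_smul_inv_norm hy) (fun j hj => ⟨fun hij => ?_, ?_⟩)
      fun F hFs hF => hzB (.inr ⟨F, hFs, hF⟩)⟩
  · exact inner_left_of_mem_orthogonal (subset_span (Set.mem_image_of_mem x (by simp [hj, hij])))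
      (smul_mem _ _ hyK)
  · contrapose!
    intro hij
    simpa [B, mem_orthogonal_singleton_iff_inner_left] using hzB (.inl ⟨⟨j, hj⟩, hij⟩)

end IsGenericOrthoEmbeddingOn

variable [Fintype V] [FiniteDimensional ℝ E]

theorem exists_isGenericOrthoEmbeddingOn (hd : 1 ≤ d) (hE : 2 * d ≤ finrank ℝ E)
    (hdeg : ∀ v, G.degree v ≤ d) (s : Finset V) :
    ∃ x : V → E, IsGenericOrthoEmbeddingOn G s x := by
  induction s using Finset.induction_on with
  | empty => exact ⟨0, .empty 0⟩
  | insert i s hi ih =>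
    obtain ⟨x, hx⟩ := ih
    obtain ⟨z, hz⟩ := hx.exists_extend hd hE hdeg hi
    exact ⟨_, hz⟩

end SimpleGraph

/-- Lemma 1 of the paper, due to Maehara. Every finite simple graph on
`n` vertices with maximum degree at most `d_max ≥ 1` admits a unit-norm embedding of its
vertices in `ℝ^{2·d_max}` in which two distinct vertices are adjacent if and only if
their embeddings are orthogonal. -/
theorem maehara_orthogonal_embedding (n dmax : ℕ) (hd : 1 ≤ dmax)
    (G : SimpleGraph (Fin n)) (hdeg : ∀ v, G.degree v ≤ dmax) :
    ∃ x : Fin n → EuclideanSpace ℝ (Fin (2 * dmax)),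
      (∀ i, ‖x i‖ = 1) ∧
      ∀ i j, i ≠ j → (G.Adj i j ↔ inner ℝ (x i) (x j) = (0 : ℝ)) := by
  obtain ⟨x, hx⟩ := SimpleGraph.exists_isGenericOrthoEmbeddingOn
    (E := EuclideanSpace ℝ (Fin (2 * dmax))) hd (by simp) hdeg univ
  exact ⟨x, fun i => hx.norm_eq_one i (mem_univ i),
    fun i j hij => hx.adj_iff i (mem_univ i) j (mem_univ j) hij⟩
end

section
/- Let G = (V, E) be a finite connected simple graph on n vertices. Define, for each vertex v_i, matrices U_i^{(l)} ∈ ℝ^{n×n} by U_i^{(1)} = A_i^{(1)} and, for l ≥ 1, U_i^{(l+1)}[p,q] = max over v_j ∈ N_i ∪ {v_i} of U_j^{(l)}[p,q] (entrywise maximum). Then for every l ≥ 1 and every vertex v_i, U_i^{(l)} = A_i^{(l)}. -/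
open scoped Classical

/-- The receptive-field graph `(V, E_i^{(l)})` of node `i` after `l` message-passing
layers: `E_i^{(l)} = {(p,q) ∈ E : d(i,p) ≤ l, d(i,q) ≤ l, d(i,p) + d(i,q) < 2l}`. -/
def recepGraph {V : Type*} (G : SimpleGraph V) (i : V) (l : ℕ) : SimpleGraph V where
  Adj p q := G.Adj p q ∧ G.dist i p ≤ l ∧ G.dist i q ≤ l ∧
    G.dist i p + G.dist i q < 2 * l
  symm := ⟨fun p q h => ⟨h.1.symm, h.2.2.1, h.2.1, by have := h.2.2.2; omega⟩⟩
  loopless := ⟨fun p h => G.loopless.irrefl p h.1⟩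

/-!
Induction on `l`. Along an edge, the distance from any fixed vertex changes by at most one, so an
edge of the depth-`l` field of a neighbour `j` of `i` (or of `i` itself) lies in the depth-`(l+1)`
field of `i`. Conversely, let `pq` be an edge of the depth-`(l+1)` field of `i` with
`d(i,p) ≤ d(i,q)`. If `d(i,p) = 0`, the edge already lies in the depth-`l` field of `i`;
otherwise the first step of a geodesic from `i` to `p` is a neighbour `j` with
`d(j,p) = d(i,p) - 1`, whose depth-`l` field contains `pq`. Since all entries are `0` or `1`,
the entrywise maximum over the closed neighbourhood is the indicator of this disjunction.
-/

theorem Finset.sup'_ite_of_le {ι α : Type*} [LinearOrder α] {a b : α} (hba : b ≤ a)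
    (s : Finset ι) (hs : s.Nonempty) (P : ι → Prop) [DecidablePred P] :
    s.sup' hs (fun j => if P j then a else b) = if ∃ j ∈ s, P j then a else b := by
  split_ifs with h
  · obtain ⟨j, hj, hPj⟩ := h
    refine le_antisymm (Finset.sup'_le _ _ fun k _ => ?_) (Finset.le_sup'_of_le _ hj ?_)
    · split_ifs <;> simp [hba]
    · simp [hPj]
  · simp only [not_exists, not_and] at h
    rw [Finset.sup'_congr hs rfl fun j hj => if_neg (h j hj), Finset.sup'_const]

namespace SimpleGraph

variable {V : Type*} {G : SimpleGraph V} {u v w : V}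

theorem Adj.dist_le_dist_add_one (hadj : G.Adj v w) : G.dist u w ≤ G.dist u v + 1 := by
  rcases hadj.diff_dist_adj (u := u) with h | h | h <;> omega

theorem exists_adj_dist_eq_sub_one (h : G.dist u v ≠ 0) :
    ∃ w, G.Adj u w ∧ G.dist w v = G.dist u v - 1 := by
  obtain ⟨p, hp⟩ := exists_walk_of_dist_ne_zero h
  cases p with
  | nil => simp at h
  | @cons _ w _ hadj p =>
    have hle : G.dist w v ≤ p.length := dist_le p
    have hge : G.dist v u ≤ G.dist v w + 1 := hadj.symm.dist_le_dist_add_one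
    rw [Walk.length_cons] at hp
    rw [dist_comm (u := v), dist_comm (u := v)] at hge
    exact ⟨w, hadj, by omega⟩

end SimpleGraph

section recepGraph

variable {V : Type*} {G : SimpleGraph V} {i p q : V} {l : ℕ}

theorem recepGraph_succ_adj_of_eq_or_adj {j : V} (hij : j = i ∨ G.Adj i j)
    (h : (recepGraph G j l).Adj p q) : (recepGraph G i (l + 1)).Adj p q := by
  obtain ⟨hpq, hp, hq, hs⟩ := h
  have hdist : ∀ x, G.dist i x ≤ G.dist j x + 1 := by
    rcases hij with rfl | hij
    · omega
    · intro x
      rw [G.dist_comm, G.dist_comm (u := j)]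
      exact hij.symm.dist_le_dist_add_one
  have := hdist p
  have := hdist q
  exact ⟨hpq, by omega, by omega, by omega⟩

theorem exists_eq_or_adj_and_recepGraph_adj (hl : 1 ≤ l)
    (h : (recepGraph G i (l + 1)).Adj p q) :
    ∃ j, (j = i ∨ G.Adj i j) ∧ (recepGraph G j l).Adj p q := by
  wlog hpq : G.dist i p ≤ G.dist i q generalizing p q
  · obtain ⟨j, hj, hadj⟩ := this h.symm (by omega)
    exact ⟨j, hj, hadj.symm⟩
  obtain ⟨hadj, -, hq, hs⟩ := h
  have hqp : G.dist i q ≤ G.dist i p + 1 := hadj.dist_le_dist_add_one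
  by_cases hp0 : G.dist i p = 0
  · exact ⟨i, .inl rfl, hadj, by omega, by omega, by omega⟩
  obtain ⟨j, hij, hjp⟩ := G.exists_adj_dist_eq_sub_one hp0
  have hjq : G.dist j q ≤ G.dist j p + 1 := hadj.dist_le_dist_add_one
  exact ⟨j, .inr hij, hadj, by omega, by omega, by omega⟩

theorem recepGraph_succ_adj_iff (hl : 1 ≤ l) :
    (recepGraph G i (l + 1)).Adj p q ↔
      ∃ j, (j = i ∨ G.Adj i j) ∧ (recepGraph G j l).Adj p q :=
  ⟨exists_eq_or_adj_and_recepGraph_adj hl,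
    fun ⟨_, hij, h⟩ => recepGraph_succ_adj_of_eq_or_adj hij h⟩

end recepGraph

theorem max_recursion_computes_receptive_field_general (n : ℕ) (G : SimpleGraph (Fin n))
    (U : ℕ → Fin n → Matrix (Fin n) (Fin n) ℝ)
    (hU1 : ∀ i, U 1 i = (recepGraph G i 1).adjMatrix ℝ)
    (hUrec : ∀ l, 1 ≤ l → ∀ i, U (l + 1) i = Matrix.of fun p q =>
      (insert i (G.neighborFinset i)).sup'
        (Finset.insert_nonempty i (G.neighborFinset i)) (fun j => U l j p q)) :
    ∀ l, 1 ≤ l → ∀ i, U l i = (recepGraph G i l).adjMatrix ℝ := by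
  intro l hl
  induction l, hl using Nat.le_induction with
  | base => exact hU1
  | succ l hl ih =>
    intro i
    ext p q
    rw [hUrec l hl i, Matrix.of_apply, SimpleGraph.adjMatrix_apply]
    simp only [ih, SimpleGraph.adjMatrix_apply]
    rw [Finset.sup'_ite_of_le zero_le_one]
    congr 1
    rw [eq_iff_iff, recepGraph_succ_adj_iff hl]
    simp only [Finset.mem_insert, SimpleGraph.mem_neighborFinset]

/-- Lemma 2 of the paper. Starting from `U_i^{(1)} = A_i^{(1)}` and
iterating the entrywise maximum over the closed neighborhood,
`U_i^{(l+1)}[p,q] = max_{j ∈ N_i ∪ {i}} U_j^{(l)}[p,q]`, one gets `U_i^{(l)} = A_i^{(l)}`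
for every `l ≥ 1` and every vertex `i`. -/
theorem max_recursion_computes_receptive_field (n : ℕ) (G : SimpleGraph (Fin n))
    (hconn : G.Connected)
    (U : ℕ → Fin n → Matrix (Fin n) (Fin n) ℝ)
    (hU1 : ∀ i, U 1 i = (recepGraph G i 1).adjMatrix ℝ)
    (hUrec : ∀ l, 1 ≤ l → ∀ i, U (l + 1) i = Matrix.of fun p q =>
      (insert i (G.neighborFinset i)).sup'
        (Finset.insert_nonempty i (G.neighborFinset i)) (fun j => U l j p q)) :
    ∀ l, 1 ≤ l → ∀ i, U l i = (recepGraph G i l).adjMatrix ℝ :=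
  max_recursion_computes_receptive_field_general n G U hU1 hUrec
end

section
/- For every finite connected simple graph G = (V, E), every vertex v_i and every integer l ≥ 1, the receptive-field edge sets satisfy E_i^{(l+1)} = ⋃_{v_j ∈ N_i ∪ {v_i}} E_j^{(l)}. -/
open scoped Classical

/-!
Moving a base point or an endpoint along an edge changes graph distance by at most one, so
`E_j^{(l)} ⊆ E_i^{(l+1)}` for every `j` in the closed neighbourhood of `i`. Conversely, for an
edge `pq` of `E_i^{(l+1)}` with `d(i,p) ≤ d(i,q)`, take `j = i` if `d(i,p) = 0` (this includes
an unreachable `p`, whose distance is the junk value `0`) and otherwise the first step of a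
shortest walk from `i` to `p`.
-/

namespace SimpleGraph

variable {V : Type*} {G : SimpleGraph V}

lemma dist_le_dist_add_one_of_adj {v w : V} (h : G.Adj v w) (u : V) :
    G.dist u w ≤ G.dist u v + 1 := by
  rcases h.diff_dist_adj (u := u) with h | h | h <;> omega

lemma exists_adj_dist_le_of_dist_eq_succ {u v : V} {k : ℕ} (h : G.dist u v = k + 1) :
    ∃ w, G.Adj u w ∧ G.dist w v ≤ k := by
  obtain ⟨p, hp⟩ := exists_walk_of_dist_ne_zero (h.trans_ne k.succ_ne_zero)
  rw [h] at hp
  cases p with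
  | nil => simp at hp
  | cons hadj p =>
    refine ⟨_, hadj, ?_⟩
    have := dist_le p
    simp only [Walk.length_cons] at hp
    omega

lemma recepGraph_le_succ_of_eq_or_adj {i j : V} (hj : j = i ∨ G.Adj i j) (l : ℕ) :
    recepGraph G j l ≤ recepGraph G i (l + 1) := by
  have hdist : ∀ x, G.dist i x ≤ G.dist j x + 1 := by
    rcases hj with rfl | hij
    · exact fun x => Nat.le_succ _
    · intro x
      rw [dist_comm, dist_comm (u := j)]
      exact dist_le_dist_add_one_of_adj hij.symm x
  rintro p q ⟨hpq, hp, hq, hsum⟩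
  have := hdist p
  have := hdist q
  exact ⟨hpq, by omega, by omega, by omega⟩

lemma exists_recepGraph_adj_of_dist_le {i p q : V} {l : ℕ} (hl : 1 ≤ l)
    (h : (recepGraph G i (l + 1)).Adj p q) (hpq : G.dist i p ≤ G.dist i q) :
    ∃ j, (j = i ∨ G.Adj i j) ∧ (recepGraph G j l).Adj p q := by
  obtain ⟨hadj, -, -, hsum⟩ := h
  have hq := dist_le_dist_add_one_of_adj hadj i
  obtain hp | ⟨k, hk⟩ : G.dist i p = 0 ∨ ∃ k, G.dist i p = k + 1 :=
    (G.dist i p).eq_zero_or_eq_succ_pred.imp id fun h => ⟨_, h⟩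
  · exact ⟨i, Or.inl rfl, hadj, by omega, by omega, by omega⟩
  · obtain ⟨j, hij, hjp⟩ := exists_adj_dist_le_of_dist_eq_succ hk
    have hjq := dist_le_dist_add_one_of_adj hadj j
    exact ⟨j, Or.inr hij, hadj, by omega, by omega, by omega⟩

end SimpleGraph

theorem receptive_field_union_general (n : ℕ) (G : SimpleGraph (Fin n))
    (i : Fin n) (l : ℕ) (hl : 1 ≤ l) :
    ∀ p q, (recepGraph G i (l + 1)).Adj p q ↔
      ∃ j, (j = i ∨ G.Adj i j) ∧ (recepGraph G j l).Adj p q := by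
  intro p q
  constructor
  · intro h
    rcases le_total (G.dist i p) (G.dist i q) with hpq | hqp
    · exact SimpleGraph.exists_recepGraph_adj_of_dist_le hl h hpq
    · obtain ⟨j, hj, hadj⟩ := SimpleGraph.exists_recepGraph_adj_of_dist_le hl h.symm hqp
      exact ⟨j, hj, hadj.symm⟩
  · rintro ⟨j, hj, h⟩
    exact SimpleGraph.recepGraph_le_succ_of_eq_or_adj hj l h

/-- the receptive fields satisfy
`E_i^{(l+1)} = ⋃_{j ∈ N_i ∪ {i}} E_j^{(l)}`. -/
theorem receptive_field_union (n : ℕ) (G : SimpleGraph (Fin n)) (hconn : G.Connected)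
    (i : Fin n) (l : ℕ) (hl : 1 ≤ l) :
    ∀ p q, (recepGraph G i (l + 1)).Adj p q ↔
      ∃ j, (j = i ∨ G.Adj i j) ∧ (recepGraph G j l).Adj p q :=
  receptive_field_union_general n G i l hl
end
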